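/- With bounded rate kernel λ, for each y ∈ O and each μ ∈ Δ_y, and for every ε with 0 < ε < (sup_{x} λ(x))⁻¹, the measure μ + ε F_y(μ) belongs to Δ_y; that is, μ + ε F_y(μ) is a nonnegative measure, has total mass 1, and is concentrated on h⁻¹(y). -/

import Mathlib

open MeasureTheory

/-- Integral of a function against a finite signed measure (via the Jordan decomposition). -/
noncomputable def sInt {I : Type*} [MeasurableSpace I] (ξ : SignedMeasure I) (f : I → ℝ) : ℝ :=
  (∫ x, f x ∂ξ.toJordanDecomposition.posPart) - ∫ x, f x ∂ξ.toJordanDecomposition.negPart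

/-- The vector field `F_y(ν) := B_y ν − ν · (B_y ν)(I)`. -/
noncomputable def Fy {I : Type*} [MeasurableSpace I]
    (B : SignedMeasure I → SignedMeasure I) (ξ : SignedMeasure I) : SignedMeasure I :=
  B ξ - ((B ξ) Set.univ) • ξ

/-- `Δ_y`: probability measures concentrated on `h⁻¹(y)`. -/
def DeltaY {I O : Type*} [MeasurableSpace I] (h : I → O) (y : O) : Set (SignedMeasure I) :=
  {ξ | (∀ A : Set I, MeasurableSet A → 0 ≤ ξ A) ∧ ξ Set.univ = 1 ∧ ξ ((h ⁻¹' {y})ᶜ) = 0}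

/-!
Since `μ ∈ Δ_y` is a nonnegative signed measure, its Jordan negative part vanishes and `B_y μ` is
given by honest integrals against the measure `m := μ⁺`:
`B_y μ (A) = ∫ λ(x, A ∩ h⁻¹(y)) dm − ∫_A λ dm`. The gain term is nonnegative, the loss term is at
most `C · μ(A)`, and `(B_y μ)(I) ≤ 0` because only jumps into `h⁻¹(y)` are gained, so
`μ(A) + ε F_y(μ)(A) ≥ (1 − ε C) μ(A) ≥ 0`. The total mass is preserved by the normalisation in
`F_y`, and `B_y μ` does not charge `h⁻¹(y)ᶜ` since gains land in `h⁻¹(y)` and `μ` vanishes off it.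
-/

open ProbabilityTheory Set

namespace MeasureTheory.SignedMeasure

variable {α : Type*} [MeasurableSpace α] {s : SignedMeasure α}

theorem negPart_eq_zero_of_nonneg (hs : ∀ A, MeasurableSet A → 0 ≤ s A) :
    s.toJordanDecomposition.negPart = 0 := by
  obtain ⟨S, hS, hposS, hnegSc⟩ := s.toJordanDecomposition.mutuallySingular
  have hnegS : s.toJordanDecomposition.negPart S = 0 := by
    have hsS := hs S hS
    rw [apply_eq_posPart_real_sub_negPart_real s hS, measureReal_def, hposS,
      ENNReal.toReal_zero, zero_sub, neg_nonneg] at hsS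
    exact (measureReal_eq_zero_iff (measure_ne_top _ _)).1 (le_antisymm hsS measureReal_nonneg)
  rw [← Measure.measure_univ_eq_zero, ← union_compl_self S]
  exact measure_union_null hnegS hnegSc

theorem apply_eq_posPart_real_of_nonneg (hs : ∀ A, MeasurableSet A → 0 ≤ s A) {A : Set α}
    (hA : MeasurableSet A) : s A = s.toJordanDecomposition.posPart.real A := by
  rw [apply_eq_posPart_real_sub_negPart_real s hA, negPart_eq_zero_of_nonneg hs,
    measureReal_zero_apply, sub_zero]

end MeasureTheory.SignedMeasure

theorem sInt_eq_integral_posPart_of_nonneg {α : Type*} [MeasurableSpace α] {s : SignedMeasure α}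
    (hs : ∀ A, MeasurableSet A → 0 ≤ s A) (f : α → ℝ) :
    sInt s f = ∫ x, f x ∂s.toJordanDecomposition.posPart := by
  rw [sInt, SignedMeasure.negPart_eq_zero_of_nonneg hs, integral_zero_measure, sub_zero]

theorem add_smul_Fy_apply {α : Type*} [MeasurableSpace α] (B : SignedMeasure α → SignedMeasure α)
    (μ : SignedMeasure α) (ε : ℝ) (A : Set α) :
    (μ + ε • Fy B μ) A = μ A + ε * (B μ A - B μ univ * μ A) := by
  rw [add_apply, smul_apply, Fy, sub_apply, smul_apply, smul_eq_mul, smul_eq_mul]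

namespace ProbabilityTheory.Kernel

variable {α β : Type*} [MeasurableSpace α] [MeasurableSpace β] {κ : Kernel α β}

theorem isFiniteKernel_of_le_ofReal {C : ℝ} (hC : ∀ a, κ a univ ≤ ENNReal.ofReal C) :
    IsFiniteKernel κ :=
  ⟨⟨_, ENNReal.ofReal_lt_top, hC⟩⟩

variable [IsFiniteKernel κ] (m : Measure α) [IsFiniteMeasure m]

theorem integral_measureReal_le_integral_measureReal_univ {s : Set β} (hs : MeasurableSet s) :
    ∫ x, (κ x).real s ∂m ≤ ∫ x, (κ x).real univ ∂m :=
  integral_mono (IsFiniteKernel.integrable m κ hs) (IsFiniteKernel.integrable m κ .univ)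
    fun _ => measureReal_mono (subset_univ s)

theorem setIntegral_measureReal_univ_le {C : ℝ} (hC : ∀ a, (κ a).real univ ≤ C) (A : Set α) :
    ∫ x in A, (κ x).real univ ∂m ≤ C * m.real A := by
  calc ∫ x in A, (κ x).real univ ∂m
      ≤ ∫ _ in A, C ∂m :=
        setIntegral_mono (IsFiniteKernel.integrable m κ .univ).integrableOn
          (integrableOn_const (measure_ne_top _ _)) hC
    _ = C * m.real A := by rw [MeasureTheory.setIntegral_const, smul_eq_mul, mul_comm]

end ProbabilityTheory.Kernel

theorem euler_step_nonneg {a gain loss b ε C : ℝ} (ha : 0 ≤ a) (hgain : 0 ≤ gain)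
    (hloss : loss ≤ C * a) (hb : b ≤ 0) (hε : 0 ≤ ε) (hεC : ε * C < 1) :
    0 ≤ a + ε * (gain - loss - b * a) := by
  calc 0 ≤ (1 - ε * C) * a + ε * gain + ε * (C * a - loss) + ε * -b * a := by
        have h1 : 0 ≤ 1 - ε * C := by linarith
        have h2 : 0 ≤ C * a - loss := by linarith
        have h3 : 0 ≤ -b := by linarith
        positivity
    _ = a + ε * (gain - loss - b * a) := by ring

theorem add_eps_Fy_mem_DeltaY_general {I O : Type*}
    [MeasurableSpace I]
    [MetricSpace O] [MeasurableSpace O] [BorelSpace O]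
    (h : I → O) (hh : Measurable h)
    (κ : ProbabilityTheory.Kernel I I)
    (C : ℝ) (hC : ∀ x, κ x Set.univ ≤ ENNReal.ofReal C)
    (y : O) (B : SignedMeasure I → SignedMeasure I)
    (hB : ∀ (ξ : SignedMeasure I) (A : Set I), MeasurableSet A →
      B ξ A = sInt ξ (fun x => (κ x (A ∩ h ⁻¹' {y})).toReal)
              - sInt ξ (Set.indicator A fun z => (κ z Set.univ).toReal))
    (μ : SignedMeasure I) (hμ : μ ∈ DeltaY h y)
    (ε : ℝ) (hε : 0 < ε) (hεC : ε * C < 1) :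
    (∀ A : Set I, MeasurableSet A → 0 ≤ (μ + ε • Fy B μ) A) ∧
    (μ + ε • Fy B μ) Set.univ = 1 ∧
    (μ + ε • Fy B μ) ((h ⁻¹' {y})ᶜ) = 0 := by
  obtain ⟨hμ_nonneg, hμ_univ, hμ_conc⟩ := hμ
  have := Kernel.isFiniteKernel_of_le_ofReal hC
  set m := μ.toJordanDecomposition.posPart
  have hS : MeasurableSet (h ⁻¹' {y}) := hh (measurableSet_singleton y)
  have hBμ : ∀ A, MeasurableSet A → B μ A =
      ∫ x, (κ x).real (A ∩ h ⁻¹' {y}) ∂m - ∫ x in A, (κ x).real univ ∂m := fun A hA => by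
    rw [hB μ A hA, sInt_eq_integral_posPart_of_nonneg hμ_nonneg,
      sInt_eq_integral_posPart_of_nonneg hμ_nonneg, integral_indicator hA]
    rfl
  have hBμ_univ : B μ univ ≤ 0 := by
    rw [hBμ _ .univ, Measure.restrict_univ, univ_inter, sub_nonpos]
    exact Kernel.integral_measureReal_le_integral_measureReal_univ m hS
  have hrate (x : I) : (κ x).real univ ≤ max C 0 :=
    ENNReal.toReal_le_of_le_ofReal (le_max_right _ _)
      ((hC x).trans (ENNReal.ofReal_le_ofReal (le_max_left _ _)))
  have hεC' : ε * max C 0 < 1 := by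
    rcases max_cases C 0 with ⟨hmax, -⟩ | ⟨hmax, -⟩ <;> rw [hmax] <;> linarith
  refine ⟨fun A hA => ?_, by rw [add_smul_Fy_apply, hμ_univ]; ring, ?_⟩
  · rw [add_smul_Fy_apply, hBμ A hA]
    exact euler_step_nonneg (hμ_nonneg A hA) (integral_nonneg fun _ => measureReal_nonneg)
      ((Kernel.setIntegral_measureReal_univ_le m hrate A).trans_eq
        (by rw [SignedMeasure.apply_eq_posPart_real_of_nonneg hμ_nonneg hA]))
      hBμ_univ hε.le hεC'
  · have hm_conc : m (h ⁻¹' {y})ᶜ = 0 := (measureReal_eq_zero_iff (measure_ne_top _ _)).1 <| by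
      rw [← SignedMeasure.apply_eq_posPart_real_of_nonneg hμ_nonneg hS.compl, hμ_conc]
    rw [add_smul_Fy_apply, hμ_conc, hBμ _ hS.compl, compl_inter_self,
      Measure.restrict_eq_zero.2 hm_conc]
    simp

/-- With bounded rate kernel, for each `y ∈ O`, `μ ∈ Δ_y` and every
`0 < ε < (sup_x λ(x))⁻¹`, the signed measure `μ + ε F_y(μ)` belongs to `Δ_y`:
it is nonnegative, has total mass `1`, and is concentrated on `h⁻¹(y)`. -/
theorem add_eps_Fy_mem_DeltaY {I O : Type*}
    [MetricSpace I] [MeasurableSpace I] [BorelSpace I]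
    [SecondCountableTopology I] [CompleteSpace I]
    [MetricSpace O] [MeasurableSpace O] [BorelSpace O]
    [SecondCountableTopology O] [CompleteSpace O]
    (h : I → O) (hh : Measurable h)
    (κ : ProbabilityTheory.Kernel I I) (hdiag : ∀ x, κ x {x} = 0)
    (C : ℝ) (hC : ∀ x, κ x Set.univ ≤ ENNReal.ofReal C)
    (y : O) (B : SignedMeasure I → SignedMeasure I)
    (hB : ∀ (ξ : SignedMeasure I) (A : Set I), MeasurableSet A →
      B ξ A = sInt ξ (fun x => (κ x (A ∩ h ⁻¹' {y})).toReal)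
              - sInt ξ (Set.indicator A fun z => (κ z Set.univ).toReal))
    (μ : SignedMeasure I) (hμ : μ ∈ DeltaY h y)
    (ε : ℝ) (hε : 0 < ε) (hεC : ε * C < 1) :
    (∀ A : Set I, MeasurableSet A → 0 ≤ (μ + ε • Fy B μ) A) ∧
    (μ + ε • Fy B μ) Set.univ = 1 ∧
    (μ + ε • Fy B μ) ((h ⁻¹' {y})ᶜ) = 0 :=
  add_eps_Fy_mem_DeltaY_general h hh κ C hC y B hB μ hμ ε hε hεC
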